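/- The map sending (a, b_1, …, b_k) with a ∈ ℤ, b_1 < ⋯ < b_k ∈ ℤ, k ≥ 0, to the group element σ^a ∘ f_{b_k} ∘ ⋯ ∘ f_{b_1} is a bijection onto G. -/

import Mathlib

open Filter Topology

noncomputable section

/-- The shift `s ↦ s - 1` on the one-point compactification `ℤ ∪ {∞}`, fixing `∞`. -/
def shiftOP : Equiv.Perm (OnePoint ℤ) :=
  (Equiv.optionCongr (Equiv.subRight (1 : ℤ)) : Equiv.Perm (Option ℤ))

/-- The phase space `X = (ℤ ∪ {∞}) × {0,1}`. -/
abbrev LampX : Type := OnePoint ℤ × Bool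

/-- The transposition `f` swapping `(0,1)` and `(0,0)`. -/
def lampF : Equiv.Perm LampX :=
  haveI : DecidableEq LampX := Classical.decEq _
  Equiv.swap (((0 : ℤ) : OnePoint ℤ), true) (((0 : ℤ) : OnePoint ℤ), false)

/-- The shift `σ` on `X`, decrementing the integer coordinate. -/
def lampSigma : Equiv.Perm LampX := (shiftOP).prodCongr (Equiv.refl Bool)

/-- `f_n = σ^{-n} ∘ f ∘ σ^n`. -/
def lampfn (n : ℤ) : Equiv.Perm LampX := lampSigma ^ (-n) * lampF * lampSigma ^ n

/-- The Lamplighter group `G = ⟨f, σ⟩`. -/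
def lampG : Subgroup (Equiv.Perm LampX) := Subgroup.closure {lampF, lampSigma}

/-- For `l = [b_1, …, b_k]`, the composition `f_{b_k} ∘ ⋯ ∘ f_{b_1}`. -/
def lampProd (l : List ℤ) : Equiv.Perm LampX := (l.reverse.map lampfn).prod

/-! An element `σ^a ∘ f_{b_k} ∘ ⋯ ∘ f_{b_1}` with distinct `b_i` sends `(s, b)` to
`(s - a, b xor [s ∈ S])`, where `S = {b_1, …, b_k}`, and fixes the points at `∞`; so it
determines `a` and `S`, and a strictly increasing list is determined by its set `S`.
Indexed by pairs `(a, S)`, these permutations are closed under composition (the new set is the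
symmetric difference of `S + c` with `T`) and inversion, and they contain `f = (0, {0})` and
`σ = (1, ∅)`: they form exactly the group `⟨f, σ⟩`. -/

open OnePoint
open scoped symmDiff

lemma lampX_perm_ext {g h : Equiv.Perm LampX}
    (hcoe : ∀ (s : ℤ) (b : Bool), g ((s : OnePoint ℤ), b) = h ((s : OnePoint ℤ), b))
    (hinfty : ∀ b : Bool, g (∞, b) = h (∞, b)) : g = h := by
  ext1 ⟨x, b⟩
  cases x with
  | infty => exact hinfty b
  | coe s => exact hcoe s b

lemma lampSigma_zpow_apply_coe (a s : ℤ) (b : Bool) :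
    (lampSigma ^ a) ((s : OnePoint ℤ), b) = (((s - a : ℤ) : OnePoint ℤ), b) := by
  induction a using Int.induction_on generalizing s with
  | zero => simp
  | succ n ih =>
    rw [zpow_add_one, Equiv.Perm.mul_apply]
    exact (ih (s - 1)).trans (by ring_nf)
  | pred n ih =>
    rw [zpow_sub_one, Equiv.Perm.mul_apply]
    exact (ih (s + 1)).trans (by ring_nf)

lemma lampSigma_zpow_apply_infty (a : ℤ) (b : Bool) : (lampSigma ^ a) (∞, b) = (∞, b) :=
  Equiv.Perm.zpow_apply_eq_self_of_apply_eq_self rfl a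

lemma lampF_apply_coe (s : ℤ) (b : Bool) :
    lampF ((s : OnePoint ℤ), b) = ((s : OnePoint ℤ), b ^^ decide (s = 0)) := by
  -- the instance `lampF` is built with: `OnePoint ℤ` has no `DecidableEq` of its own
  let _ : DecidableEq LampX := Classical.decEq _
  by_cases hs : s = 0
  · subst hs
    cases b
    · exact Equiv.swap_apply_right _ _
    · exact Equiv.swap_apply_left _ _
  · rw [lampF, Equiv.swap_apply_of_ne_of_ne] <;> simp [hs]

lemma lampF_apply_infty (b : Bool) : lampF (∞, b) = (∞, b) := by
  let _ : DecidableEq LampX := Classical.decEq _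
  rw [lampF, Equiv.swap_apply_of_ne_of_ne] <;> simp

lemma lampfn_apply_coe (n s : ℤ) (b : Bool) :
    lampfn n ((s : OnePoint ℤ), b) = ((s : OnePoint ℤ), b ^^ decide (s = n)) := by
  rw [lampfn, Equiv.Perm.mul_apply, Equiv.Perm.mul_apply, lampSigma_zpow_apply_coe,
    lampF_apply_coe, lampSigma_zpow_apply_coe]
  simp [sub_eq_zero]

lemma lampfn_apply_infty (n : ℤ) (b : Bool) : lampfn n (∞, b) = (∞, b) := by
  rw [lampfn, Equiv.Perm.mul_apply, Equiv.Perm.mul_apply, lampSigma_zpow_apply_infty,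
    lampF_apply_infty, lampSigma_zpow_apply_infty]

lemma lampProd_cons (n : ℤ) (l : List ℤ) : lampProd (n :: l) = lampProd l * lampfn n := by
  simp [lampProd]

lemma lampProd_apply_coe {l : List ℤ} (hl : l.Nodup) (s : ℤ) (b : Bool) :
    lampProd l ((s : OnePoint ℤ), b) = ((s : OnePoint ℤ), b ^^ decide (s ∈ l)) := by
  induction l generalizing b with
  | nil => simp [lampProd]
  | cons n l ih =>
    obtain ⟨hn, hl⟩ := List.nodup_cons.mp hl
    rw [lampProd_cons, Equiv.Perm.mul_apply, lampfn_apply_coe, ih hl]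
    by_cases hs : s = n
    · subst hs
      simp [hn]
    · simp [hs]

lemma lampProd_apply_infty (l : List ℤ) (b : Bool) : lampProd l (∞, b) = (∞, b) := by
  induction l with
  | nil => rfl
  | cons n l ih => rw [lampProd_cons, Equiv.Perm.mul_apply, lampfn_apply_infty, ih]

def lampNormalForm (a : ℤ) (S : Finset ℤ) : Equiv.Perm LampX :=
  lampSigma ^ a * lampProd S.sort

lemma lampNormalForm_apply_coe (a : ℤ) (S : Finset ℤ) (s : ℤ) (b : Bool) :
    lampNormalForm a S ((s : OnePoint ℤ), b)
      = (((s - a : ℤ) : OnePoint ℤ), b ^^ decide (s ∈ S)) := by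
  rw [lampNormalForm, Equiv.Perm.mul_apply, lampProd_apply_coe (S.sort_nodup _),
    lampSigma_zpow_apply_coe]
  simp only [Finset.mem_sort]

lemma lampNormalForm_apply_infty (a : ℤ) (S : Finset ℤ) (b : Bool) :
    lampNormalForm a S (∞, b) = (∞, b) := by
  rw [lampNormalForm, Equiv.Perm.mul_apply, lampProd_apply_infty, lampSigma_zpow_apply_infty]

lemma lampNormalForm_zero_empty : lampNormalForm 0 ∅ = 1 := by
  simp [lampNormalForm, lampProd]

lemma lampNormalForm_mul (a c : ℤ) (S T : Finset ℤ) :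
    lampNormalForm a S * lampNormalForm c T
      = lampNormalForm (a + c) (S.map (Equiv.addRight c).toEmbedding ∆ T) := by
  refine lampX_perm_ext (fun s b => ?_) (fun b => ?_)
  · simp only [Equiv.Perm.mul_apply, lampNormalForm_apply_coe, Finset.mem_symmDiff,
      Finset.mem_map_equiv, Equiv.addRight_symm_apply, ← sub_eq_add_neg]
    refine Prod.ext (by simp; ring) ?_
    by_cases hS : s - c ∈ S <;> by_cases hT : s ∈ T <;> simp [hS, hT]
  · simp only [Equiv.Perm.mul_apply, lampNormalForm_apply_infty]

lemma lampNormalForm_inv (a : ℤ) (S : Finset ℤ) :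
    (lampNormalForm a S)⁻¹ = lampNormalForm (-a) (S.map (Equiv.addRight (-a)).toEmbedding) := by
  refine inv_eq_of_mul_eq_one_right ?_
  rw [lampNormalForm_mul, add_neg_cancel, symmDiff_self, Finset.bot_eq_empty,
    lampNormalForm_zero_empty]

lemma lampNormalForm_injective :
    Function.Injective (fun p : ℤ × Finset ℤ => lampNormalForm p.1 p.2) := by
  rintro ⟨a, S⟩ ⟨c, T⟩ h
  have hpt (s : ℤ) := congr($h ((s : OnePoint ℤ), false))
  simp only [lampNormalForm_apply_coe, Prod.mk.injEq, coe_eq_coe] at hpt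
  ext1
  · simpa using (hpt 0).1
  · ext s
    simpa using (hpt s).2

def lampNormalForms : Subgroup (Equiv.Perm LampX) where
  carrier := Set.range (fun p : ℤ × Finset ℤ => lampNormalForm p.1 p.2)
  one_mem' := ⟨(0, ∅), lampNormalForm_zero_empty⟩
  mul_mem' := by
    rintro _ _ ⟨⟨a, S⟩, rfl⟩ ⟨⟨c, T⟩, rfl⟩
    exact ⟨(a + c, _), (lampNormalForm_mul a c S T).symm⟩
  inv_mem' := by
    rintro _ ⟨⟨a, S⟩, rfl⟩
    exact ⟨(-a, _), (lampNormalForm_inv a S).symm⟩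

lemma lampNormalForm_mem_lampG (a : ℤ) (S : Finset ℤ) : lampNormalForm a S ∈ lampG := by
  have hσ : lampSigma ∈ lampG := Subgroup.subset_closure (by simp)
  have hf : lampF ∈ lampG := Subgroup.subset_closure (by simp)
  refine mul_mem (zpow_mem hσ a) (Subgroup.list_prod_mem _ fun g hg => ?_)
  obtain ⟨n, -, rfl⟩ := List.mem_map.mp hg
  exact mul_mem (mul_mem (zpow_mem hσ _) hf) (zpow_mem hσ _)

lemma lampG_eq_lampNormalForms : lampG = lampNormalForms := by
  refine le_antisymm (Subgroup.closure_le _ |>.mpr ?_) ?_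
  · rintro g (rfl | rfl)
    · exact ⟨(0, {0}), by simp [lampNormalForm, lampProd, lampfn]⟩
    · exact ⟨(1, ∅), by simp [lampNormalForm, lampProd]⟩
  · rintro _ ⟨⟨a, S⟩, rfl⟩
    exact lampNormalForm_mem_lampG a S

lemma List.sort_toFinset_of_pairwise_lt {α : Type*} [LinearOrder α] {l : List α}
    (hl : l.Pairwise (· < ·)) : l.toFinset.sort = l :=
  (List.toFinset_sort _ hl.nodup).mpr (hl.imp le_of_lt)

lemma List.toFinset_bijective_of_pairwise_lt {α : Type*} [LinearOrder α] :
    Function.Bijective (fun l : {l : List α // l.Pairwise (· < ·)} => l.1.toFinset) := by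
  refine ⟨fun ⟨l, hl⟩ ⟨l', hl'⟩ h => Subtype.ext ?_,
    fun S => ⟨⟨S.sort, S.sortedLT_sort.pairwise⟩, ?_⟩⟩
  · change l = l'
    rw [← List.sort_toFinset_of_pairwise_lt hl, ← List.sort_toFinset_of_pairwise_lt hl']
    exact congrArg Finset.sort h
  · exact S.sort_toFinset _

lemma lampSigma_zpow_mul_lampProd_of_pairwise (a : ℤ) {l : List ℤ} (hl : l.Pairwise (· < ·)) :
    lampSigma ^ a * lampProd l = lampNormalForm a l.toFinset := by
  rw [lampNormalForm, List.sort_toFinset_of_pairwise_lt hl]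

/-- The map `(a, b_1, …, b_k) ↦ σ^a ∘ f_{b_k} ∘ ⋯ ∘ f_{b_1}` (with `a ∈ ℤ` and
`b_1 < ⋯ < b_k ∈ ℤ`) is a bijection onto the Lamplighter group `G = ⟨f, σ⟩`. -/
theorem lamplighter_normal_form_bijective :
    Function.Injective
      (fun p : ℤ × {l : List ℤ // l.Pairwise (· < ·)} => lampSigma ^ p.1 * lampProd p.2.1) ∧
    Set.range
      (fun p : ℤ × {l : List ℤ // l.Pairwise (· < ·)} => lampSigma ^ p.1 * lampProd p.2.1)
      = (lampG : Set (Equiv.Perm LampX)) := by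
  have hnormal :
      (fun p : ℤ × {l : List ℤ // l.Pairwise (· < ·)} => lampSigma ^ p.1 * lampProd p.2.1)
        = (fun p : ℤ × Finset ℤ => lampNormalForm p.1 p.2) ∘ Prod.map id (·.1.toFinset) :=
    funext fun p => lampSigma_zpow_mul_lampProd_of_pairwise p.1 p.2.2
  have hbij := (Function.bijective_id (α := ℤ)).prodMap
    (List.toFinset_bijective_of_pairwise_lt (α := ℤ))
  rw [hnormal, hbij.2.range_comp, lampG_eq_lampNormalForms]
  exact ⟨lampNormalForm_injective.comp hbij.1, rfl⟩

end
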